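/- arXiv:1808.05395 — 2 statements merged into one kernel-verified Lean document; each statement's English description precedes it below -/
import Mathlib

section
/- Let β₁,…,β_N > 0 and let (Z_n) be a sequence of nonnegative reals satisfying Z_{n+1} ≤ C · bⁿ · (1/N) · Σ_{i=1}^N Z_n^{1+β_i} for all n ≥ 0, where C, b > 1. Set β = min{β₁,…,β_N}. If Z₀ ≤ C^{-1/β} · b^{-1/β²}, then Z_n → 0 as n → ∞. -/
/-!
Once `Z n ≤ 1`, each `Z n ^ (1 + β i)` is at most `Z n ^ (1 + βm)`, so the averaged recurrence
implies the single-exponent one `Z (n + 1) ≤ C bⁿ Z n ^ (1 + βm)`. The geometric sequence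
`A rⁿ` with `r = b^(-1/βm)` and `A = C^(-1/βm) b^(-1/βm²)` satisfies that recurrence with
equality, and `A ≤ 1`; so by induction `Z n ≤ A rⁿ ≤ 1` for all `n`, and `A rⁿ → 0`.
-/

open Filter

namespace DeGiorgi

noncomputable def majorant (C b β : ℝ) (n : ℕ) : ℝ :=
  C ^ (-(1 / β)) * b ^ (-(1 / β ^ 2)) * (b ^ (-(1 / β))) ^ n

variable {C b β : ℝ}

@[simp]
theorem majorant_zero : majorant C b β 0 = C ^ (-(1 / β)) * b ^ (-(1 / β ^ 2)) := by
  simp [majorant]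

theorem majorant_succ (n : ℕ) : majorant C b β (n + 1) = majorant C b β n * b ^ (-(1 / β)) := by
  simp only [majorant, pow_succ, mul_assoc]

theorem majorant_pos (hC : 0 < C) (hb : 0 < b) (n : ℕ) : 0 < majorant C b β n := by
  unfold majorant; positivity

theorem majorant_le_one (hC : 1 ≤ C) (hb : 1 ≤ b) (hβ : 0 ≤ β) (n : ℕ) :
    majorant C b β n ≤ 1 := by
  have hexp : ∀ p : ℝ, 0 ≤ p → -(1 / p) ≤ 0 := fun p hp => by
    have := one_div_nonneg.2 hp; linarith
  have hr := Real.rpow_le_one_of_one_le_of_nonpos hb (hexp β hβ)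
  unfold majorant
  refine mul_le_one₀ (mul_le_one₀ ?_ (by positivity) ?_) (by positivity)
    (pow_le_one₀ (by positivity) hr)
  · exact Real.rpow_le_one_of_one_le_of_nonpos hC (hexp β hβ)
  · exact Real.rpow_le_one_of_one_le_of_nonpos hb (hexp _ (sq_nonneg β))

-- This identity is what fixes the exponents `-1/β` and `-1/β²` in `majorant`.
theorem mul_majorant_rpow (hC : 0 < C) (hb : 0 < b) (hβ : 0 < β) (n : ℕ) :
    C * b ^ n * majorant C b β n ^ β = b ^ (-(1 / β)) := by
  have key : ∀ {x : ℝ} (p : ℝ), 0 < x → (x ^ (-(p / β))) ^ β = x ^ (-p) := fun p hx => by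
    rw [← Real.rpow_mul hx.le]; congr 1; field_simp
  have hβ2 : -(1 / β ^ 2) = -((1 / β) / β) := by ring
  unfold majorant
  rw [Real.mul_rpow (by positivity) (by positivity), Real.mul_rpow (by positivity) (by positivity),
    Real.rpow_pow_comm hb.le, hβ2, key _ hC, key _ hb, key _ (pow_pos hb n),
    Real.rpow_neg_one, Real.rpow_neg_one]
  field_simp

theorem mul_majorant_rpow_one_add (hC : 0 < C) (hb : 0 < b) (hβ : 0 < β) (n : ℕ) :
    C * b ^ n * majorant C b β n ^ (1 + β) = majorant C b β (n + 1) := by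
  rw [Real.rpow_add (majorant_pos hC hb n), Real.rpow_one, majorant_succ,
    ← mul_majorant_rpow hC hb hβ n]
  ring

theorem tendsto_majorant (hb : 1 < b) (hβ : 0 < β) :
    Tendsto (majorant C b β) atTop (nhds 0) := by
  have hr0 : 0 ≤ b ^ (-(1 / β)) := by positivity
  have hr1 : b ^ (-(1 / β)) < 1 :=
    Real.rpow_lt_one_of_one_lt_of_neg hb (neg_lt_zero.2 (one_div_pos.2 hβ))
  unfold majorant
  simpa only [mul_zero] using
    (tendsto_pow_atTop_nhds_zero_of_lt_one hr0 hr1).const_mul (C ^ (-(1 / β)) * b ^ (-(1 / β ^ 2)))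

variable {Z : ℕ → ℝ}

theorem le_majorant_of_recurrence (hC : 1 ≤ C) (hb : 1 < b) (hβ : 0 < β) (hZ : ∀ n, 0 ≤ Z n)
    (hrec : ∀ n, Z n ≤ 1 → Z (n + 1) ≤ C * b ^ n * Z n ^ (1 + β))
    (h0 : Z 0 ≤ C ^ (-(1 / β)) * b ^ (-(1 / β ^ 2))) (n : ℕ) :
    Z n ≤ majorant C b β n := by
  induction n with
  | zero => simpa using h0
  | succ n ih =>
    have hZn : Z n ≤ 1 := ih.trans (majorant_le_one hC hb.le hβ.le n)
    calc Z (n + 1) ≤ C * b ^ n * Z n ^ (1 + β) := hrec n hZn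
      _ ≤ C * b ^ n * majorant C b β n ^ (1 + β) := by
        gcongr
        exact hZ n
      _ = majorant C b β (n + 1) :=
        mul_majorant_rpow_one_add (by linarith) (by linarith) hβ n

theorem tendsto_zero_of_recurrence (hC : 1 ≤ C) (hb : 1 < b) (hβ : 0 < β) (hZ : ∀ n, 0 ≤ Z n)
    (hrec : ∀ n, Z n ≤ 1 → Z (n + 1) ≤ C * b ^ n * Z n ^ (1 + β))
    (h0 : Z 0 ≤ C ^ (-(1 / β)) * b ^ (-(1 / β ^ 2))) :
    Tendsto Z atTop (nhds 0) :=
  squeeze_zero hZ (le_majorant_of_recurrence hC hb hβ hZ hrec h0) (tendsto_majorant hb hβ)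

end DeGiorgi

theorem mean_rpow_le_rpow_of_le_one {N : ℕ} {x p : ℝ} {q : Fin N → ℝ} (hx0 : 0 ≤ x) (hx1 : x ≤ 1)
    (hp : 0 ≤ p) (hq : ∀ i, p ≤ q i) :
    (1 : ℝ) / N * ∑ i, x ^ q i ≤ x ^ p := by
  have hsum : ∑ i, x ^ q i ≤ N * x ^ p := by
    simpa using Finset.sum_le_card_nsmul Finset.univ _ _
      fun i _ => Real.rpow_le_rpow_of_exponent_ge' hx0 hx1 hp (hq i)
  rcases N.eq_zero_or_pos with rfl | hN
  · simpa using Real.rpow_nonneg hx0 p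
  · calc (1 : ℝ) / N * ∑ i, x ^ q i ≤ 1 / N * (N * x ^ p) := by gcongr
      _ = x ^ p := by field_simp

theorem degiorgi_iteration_multi_general
    (N : ℕ) (β : Fin N → ℝ) (hβ : ∀ i, 0 < β i)
    (C b : ℝ) (hC : 1 < C) (hb : 1 < b)
    (Z : ℕ → ℝ) (hZ : ∀ n, 0 ≤ Z n)
    (hrec : ∀ n, Z (n + 1) ≤ C * b ^ n * ((1 : ℝ) / N) * ∑ i, Z n ^ (1 + β i))
    (βm : ℝ) (hβm_le : ∀ i, βm ≤ β i) (hβm_mem : ∃ i, β i = βm)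
    (h0 : Z 0 ≤ C ^ (-(1 / βm)) * b ^ (-(1 / βm ^ 2))) :
    Tendsto Z atTop (nhds 0) := by
  obtain ⟨i₀, rfl⟩ := hβm_mem
  refine DeGiorgi.tendsto_zero_of_recurrence hC.le hb (hβ i₀) hZ (fun n hZn => ?_) h0
  have hmean : (1 : ℝ) / N * ∑ i, Z n ^ (1 + β i) ≤ Z n ^ (1 + β i₀) :=
    mean_rpow_le_rpow_of_le_one (hZ n) hZn (by linarith [hβ i₀])
      fun i => by linarith [hβm_le i]
  calc Z (n + 1) ≤ C * b ^ n * ((1 : ℝ) / N * ∑ i, Z n ^ (1 + β i)) := by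
        simpa only [mul_assoc] using hrec n
    _ ≤ C * b ^ n * Z n ^ (1 + β i₀) :=
        mul_le_mul_of_nonneg_left hmean (mul_pos (by linarith) (pow_pos (by linarith) n)).le

/-- Generalized De Giorgi iteration lemma with several exponents. -/
theorem degiorgi_iteration_multi
    (N : ℕ) (hN : 1 ≤ N) (β : Fin N → ℝ) (hβ : ∀ i, 0 < β i)
    (C b : ℝ) (hC : 1 < C) (hb : 1 < b)
    (Z : ℕ → ℝ) (hZ : ∀ n, 0 ≤ Z n)
    (hrec : ∀ n, Z (n + 1) ≤ C * b ^ n * ((1 : ℝ) / N) * ∑ i, Z n ^ (1 + β i))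
    (βm : ℝ) (hβm_le : ∀ i, βm ≤ β i) (hβm_mem : ∃ i, β i = βm)
    (h0 : Z 0 ≤ C ^ (-(1 / βm)) * b ^ (-(1 / βm ^ 2))) :
    Tendsto Z atTop (nhds 0) :=
  degiorgi_iteration_multi_general N β hβ C b hC hb Z hZ hrec βm hβm_le hβm_mem h0
end

section
/- Let p > 2 and α, β, a, b, δ > 0. Suppose x₁, x₂ : [1,1+δ] → ℝ are continuous with 0 ≤ x₁(s) ≤ b(s−1)^{(p−1)/(p−2)} and a(s−1)^{(p−1)/(p−2)} ≤ x₂(s) ≤ b(s−1)^{(p−1)/(p−2)}. Then T₂(s) := ∫₁^s (−α x₁(τ) + β x₂(τ)^{1/(p−1)} τ) dτ satisfies T₂(s) ≥ −αb·((p−2)/(2p−3))·(s−1)^{(2p−3)/(p−2)} + βa^{1/(p−1)}·((p−2)/(p−1))·(s−1)^{(p−1)/(p−2)} for all s ∈ [1,1+δ]. In particular, since (2p−3)/(p−2) > (p−1)/(p−2), there exists δ₀ > 0 (depending on p, α, β, a, b) such that T₂(s) ≥ (β/2)a^{1/(p−1)}·((p−2)/(p−1))·(s−1)^{(p−1)/(p−2)}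 for all s ∈ [1, 1+δ₀]. -/
open intervalIntegral Set

lemma int_pow_aux (s r : ℝ) (hr : 0 < r) :
    ∫ τ in (1:ℝ)..s, (τ - 1) ^ r = (s - 1) ^ (r + 1) / (r + 1) := by
  have := intervalIntegral.integral_comp_sub_right (a := (1:ℝ)) (b := s)
    (fun x => x ^ r) 1
  rw [this, integral_rpow (Or.inl (by linarith))]
  rw [show (1:ℝ) - 1 = 0 by ring, Real.zero_rpow (by linarith)]
  ring

/-- Lower bound on the second component of the Picard operator in the Tikhonov
construction: the negative term has higher vanishing order at s = 1 and is
absorbed for s close to 1. -/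
theorem T2_lower_bound
    (p α β a b δ : ℝ) (hp : 2 < p) (hα : 0 < α) (hβ : 0 < β)
    (ha : 0 < a) (hb : 0 < b) (hδ : 0 < δ)
    (x₁ x₂ : ℝ → ℝ)
    (hx₁c : ContinuousOn x₁ (Icc 1 (1 + δ))) (hx₂c : ContinuousOn x₂ (Icc 1 (1 + δ)))
    (hx₁lb : ∀ s ∈ Icc (1 : ℝ) (1 + δ), 0 ≤ x₁ s)
    (hx₁ub : ∀ s ∈ Icc (1 : ℝ) (1 + δ), x₁ s ≤ b * (s - 1) ^ ((p - 1) / (p - 2)))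
    (hx₂lb : ∀ s ∈ Icc (1 : ℝ) (1 + δ), a * (s - 1) ^ ((p - 1) / (p - 2)) ≤ x₂ s)
    (hx₂ub : ∀ s ∈ Icc (1 : ℝ) (1 + δ), x₂ s ≤ b * (s - 1) ^ ((p - 1) / (p - 2)))
    (T₂ : ℝ → ℝ)
    (hT₂ : ∀ s, T₂ s = ∫ τ in (1 : ℝ)..s,
      (-α * x₁ τ + β * x₂ τ ^ ((p - 1)⁻¹) * τ)) :
    (∀ s ∈ Icc (1 : ℝ) (1 + δ),
      -α * b * ((p - 2) / (2 * p - 3)) * (s - 1) ^ ((2 * p - 3) / (p - 2)) +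
        β * a ^ (1 / (p - 1)) * ((p - 2) / (p - 1)) * (s - 1) ^ ((p - 1) / (p - 2))
        ≤ T₂ s) ∧
    ((p - 1) / (p - 2) < (2 * p - 3) / (p - 2)) ∧
    (∃ δ₀ : ℝ, 0 < δ₀ ∧ ∀ s ∈ Icc (1 : ℝ) (1 + min δ δ₀),
      (β / 2) * a ^ (1 / (p - 1)) * ((p - 2) / (p - 1)) *
        (s - 1) ^ ((p - 1) / (p - 2)) ≤ T₂ s) := by
  have hp2 : (0:ℝ) < p - 2 := by linarith
  have hp1 : (0:ℝ) < p - 1 := by linarith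
  have hp3 : (0:ℝ) < 2 * p - 3 := by linarith
  set e : ℝ := (p - 1) / (p - 2) with he
  have he0 : 0 < e := div_pos hp1 hp2
  have hr2 : (0:ℝ) < (p - 2)⁻¹ := inv_pos.2 hp2
  have hE : e + 1 = (2 * p - 3) / (p - 2) := by rw [he]; field_simp; ring
  have hee : (p - 2)⁻¹ + 1 = e := by rw [he]; field_simp; ring
  -- part 1
  have key : ∀ s ∈ Icc (1 : ℝ) (1 + δ),
      -α * b * ((p - 2) / (2 * p - 3)) * (s - 1) ^ ((2 * p - 3) / (p - 2)) +
        β * a ^ (1 / (p - 1)) * ((p - 2) / (p - 1)) * (s - 1) ^ e ≤ T₂ s := by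
    intro s hs
    obtain ⟨hs1, hs2⟩ := hs
    rw [hT₂]
    have hsub : Icc (1:ℝ) s ⊆ Icc 1 (1 + δ) := Icc_subset_Icc le_rfl hs2
    have huIcc : uIcc (1:ℝ) s = Icc 1 s := uIcc_of_le hs1
    -- integrability of the integrand
    have hfc : ContinuousOn (fun τ => -α * x₁ τ + β * x₂ τ ^ ((p - 1)⁻¹) * τ)
        (Icc 1 (1 + δ)) := by
      apply ContinuousOn.add (continuousOn_const.mul hx₁c)
      exact (continuousOn_const.mul
        (hx₂c.rpow continuousOn_const (fun x hx => Or.inr (by positivity)))).mul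
        continuousOn_id
    have hfint : IntervalIntegrable
        (fun τ => -α * x₁ τ + β * x₂ τ ^ ((p - 1)⁻¹) * τ) MeasureTheory.volume 1 s :=
      ContinuousOn.intervalIntegrable (by rw [huIcc]; exact hfc.mono hsub)
    -- the lower comparison function
    have hg1c : ContinuousOn (fun τ : ℝ => -(α * b) * (τ - 1) ^ e) (Icc 1 s) :=
      continuousOn_const.mul
        ((continuousOn_id.sub continuousOn_const).rpow_const
          (fun x _ => Or.inr he0.le))
    have hg2c : ContinuousOn
        (fun τ : ℝ => β * a ^ (1 / (p - 1)) * (τ - 1) ^ ((p - 2)⁻¹)) (Icc 1 s) :=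
      continuousOn_const.mul
        ((continuousOn_id.sub continuousOn_const).rpow_const
          (fun x _ => Or.inr hr2.le))
    have hg1int : IntervalIntegrable (fun τ : ℝ => -(α * b) * (τ - 1) ^ e)
        MeasureTheory.volume 1 s :=
      ContinuousOn.intervalIntegrable (by rw [huIcc]; exact hg1c)
    have hg2int : IntervalIntegrable
        (fun τ : ℝ => β * a ^ (1 / (p - 1)) * (τ - 1) ^ ((p - 2)⁻¹))
        MeasureTheory.volume 1 s :=
      ContinuousOn.intervalIntegrable (by rw [huIcc]; exact hg2c)
    have hmono : ∀ τ ∈ Icc (1:ℝ) s,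
        (fun τ : ℝ => -(α * b) * (τ - 1) ^ e
          + β * a ^ (1 / (p - 1)) * (τ - 1) ^ ((p - 2)⁻¹)) τ
          ≤ -α * x₁ τ + β * x₂ τ ^ ((p - 1)⁻¹) * τ := by
      intro τ hτ
      have hτ' := hsub hτ
      have hτ1 : (1:ℝ) ≤ τ := hτ.1
      have ht0 : (0:ℝ) ≤ τ - 1 := by linarith
      have h1 : x₁ τ ≤ b * (τ - 1) ^ e := hx₁ub τ hτ'
      have h2 : (a * (τ - 1) ^ e) ^ ((p - 1)⁻¹) ≤ x₂ τ ^ ((p - 1)⁻¹) :=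
        Real.rpow_le_rpow (by positivity) (hx₂lb τ hτ') (by positivity)
      have h3 : (a * (τ - 1) ^ e) ^ ((p - 1)⁻¹)
          = a ^ (1 / (p - 1)) * (τ - 1) ^ ((p - 2)⁻¹) := by
        have hexp2 : e * (p - 1)⁻¹ = (p - 2)⁻¹ := by
          rw [he]; field_simp
        rw [Real.mul_rpow ha.le (by positivity), ← Real.rpow_mul ht0, hexp2, one_div]
      have hA : a ^ (1 / (p - 1)) * (τ - 1) ^ ((p - 2)⁻¹) ≤ x₂ τ ^ ((p - 1)⁻¹) :=
        h3 ▸ h2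
      have hA0 : (0:ℝ) ≤ a ^ (1 / (p - 1)) * (τ - 1) ^ ((p - 2)⁻¹) := by positivity
      have hx2r0 : (0:ℝ) ≤ x₂ τ ^ ((p - 1)⁻¹) := le_trans hA0 hA
      have hpart1 : -(α * b) * (τ - 1) ^ e ≤ -α * x₁ τ := by nlinarith
      have hpart2 : β * a ^ (1 / (p - 1)) * (τ - 1) ^ ((p - 2)⁻¹)
          ≤ β * x₂ τ ^ ((p - 1)⁻¹) * τ := by
        have := mul_le_mul (mul_le_mul_of_nonneg_left hA hβ.le) hτ1 zero_le_one
          (by positivity)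
        simpa [mul_assoc] using this
      simp only
      linarith
    have hint := intervalIntegral.integral_mono_on hs1
      (hg1int.add hg2int) hfint hmono
    have hIg : (∫ τ in (1:ℝ)..s,
        (-(α * b) * (τ - 1) ^ e + β * a ^ (1 / (p - 1)) * (τ - 1) ^ ((p - 2)⁻¹)))
        = -(α * b) * ((s - 1) ^ (e + 1) / (e + 1))
          + β * a ^ (1 / (p - 1)) * ((s - 1) ^ ((p - 2)⁻¹ + 1) / ((p - 2)⁻¹ + 1)) := by
      rw [intervalIntegral.integral_add hg1int hg2int,
        intervalIntegral.integral_const_mul, intervalIntegral.integral_const_mul,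
        int_pow_aux s e he0, int_pow_aux s _ hr2]
    rw [hIg] at hint
    rw [hE, hee] at hint
    have heq : -(α * b) * ((s - 1) ^ ((2 * p - 3) / (p - 2)) / ((2 * p - 3) / (p - 2)))
        + β * a ^ (1 / (p - 1)) * ((s - 1) ^ e / e)
        = -α * b * ((p - 2) / (2 * p - 3)) * (s - 1) ^ ((2 * p - 3) / (p - 2)) +
          β * a ^ (1 / (p - 1)) * ((p - 2) / (p - 1)) * (s - 1) ^ e := by
      rw [he]; field_simp
    linarith
  have hexp : (p - 1) / (p - 2) < (2 * p - 3) / (p - 2) := by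
    rw [div_lt_div_iff₀ hp2 hp2]
    nlinarith
  refine ⟨key, hexp, ?_⟩
  have hC0 : 0 < α * b * ((p - 2) / (2 * p - 3)) :=
    mul_pos (mul_pos hα hb) (div_pos hp2 hp3)
  have hD0 : 0 < β / 2 * a ^ (1 / (p - 1)) * ((p - 2) / (p - 1)) :=
    mul_pos (mul_pos (by linarith) (Real.rpow_pos_of_pos ha _)) (div_pos hp2 hp1)
  refine ⟨(β / 2 * a ^ (1 / (p - 1)) * ((p - 2) / (p - 1))) /
      (α * b * ((p - 2) / (2 * p - 3))), div_pos hD0 hC0, ?_⟩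
  intro s hs
  obtain ⟨hs1, hs2⟩ := hs
  have hminl := min_le_left δ ((β / 2 * a ^ (1 / (p - 1)) * ((p - 2) / (p - 1))) /
      (α * b * ((p - 2) / (2 * p - 3))))
  have hminr := min_le_right δ ((β / 2 * a ^ (1 / (p - 1)) * ((p - 2) / (p - 1))) /
      (α * b * ((p - 2) / (2 * p - 3))))
  have hsδ : s ≤ 1 + δ := by linarith
  have hk := key s ⟨hs1, hsδ⟩
  have habs : α * b * ((p - 2) / (2 * p - 3)) * (s - 1) ^ ((2 * p - 3) / (p - 2))
      ≤ β / 2 * a ^ (1 / (p - 1)) * ((p - 2) / (p - 1)) * (s - 1) ^ e := by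
    rcases eq_or_lt_of_le hs1 with h | h
    · simp only [show s - 1 = 0 by linarith,
        Real.zero_rpow (ne_of_gt (div_pos hp3 hp2)), Real.zero_rpow (ne_of_gt he0),
        mul_zero, le_refl]
    · have ht : 0 < s - 1 := by linarith
      have hs3 : s - 1 ≤ (β / 2 * a ^ (1 / (p - 1)) * ((p - 2) / (p - 1))) /
          (α * b * ((p - 2) / (2 * p - 3))) := by linarith
      rw [← hE, Real.rpow_add ht, Real.rpow_one]
      have hY := Real.rpow_pos_of_pos ht e
      have h5 : α * b * ((p - 2) / (2 * p - 3)) * (s - 1)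
          ≤ β / 2 * a ^ (1 / (p - 1)) * ((p - 2) / (p - 1)) := by
        have h6 := mul_le_mul_of_nonneg_left hs3 hC0.le
        have h7 : α * b * ((p - 2) / (2 * p - 3)) *
            ((β / 2 * a ^ (1 / (p - 1)) * ((p - 2) / (p - 1))) /
              (α * b * ((p - 2) / (2 * p - 3))))
            = β / 2 * a ^ (1 / (p - 1)) * ((p - 2) / (p - 1)) :=
          mul_div_cancel₀ _ (ne_of_gt hC0)
        linarith
      nlinarith [mul_nonneg (sub_nonneg.2 h5) hY.le]
  linarith
end
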